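/- arXiv:2109.00219 — 2 statements merged into one kernel-verified Lean document; each statement's English description precedes it below -/
import Mathlib

section
/- Let R be an integral domain with quotient field L, T an overring of R, * a star operation on R and *' a star operation on T. Then the map δ(*',*) : F(R) → F(R) defined by E ↦ (ET)^{*'} ∩ E^{*} is a star operation on R. Moreover, if * and *' are of finite type, then δ(*',*) is of finite type. -/
open scoped nonZeroDivisors

/-- A star operation on the integral domain `R`, given as a subring of (the field) `L`,
with respect to the quotient field of `R` inside `L`. -/
structure StarOp (L : Type*) [CommRing L] (R : Subring L) where
  toFun : FractionalIdeal (nonZeroDivisors R) L → FractionalIdeal (nonZeroDivisors R) L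
  smul_star : ∀ (a : L), a ≠ 0 → ∀ E F : FractionalIdeal (nonZeroDivisors R) L, E ≠ 0 →
    ((F : Submodule R L) : Set L) = (fun y => a * y) '' ((E : Submodule R L) : Set L) →
    ((toFun F : Submodule R L) : Set L) = (fun y => a * y) '' ((toFun E : Submodule R L) : Set L)
  le_star : ∀ E : FractionalIdeal (nonZeroDivisors R) L, E ≠ 0 → E ≤ toFun E
  mono_star : ∀ E F : FractionalIdeal (nonZeroDivisors R) L, E ≠ 0 → F ≠ 0 →
    E ≤ F → toFun E ≤ toFun F
  star_star : ∀ E : FractionalIdeal (nonZeroDivisors R) L, E ≠ 0 → toFun (toFun E) = toFun E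

/-- A star operation is of finite type if `E* = ⋃ {F* : F ∈ f(R), F ⊆ E}`. -/
def StarOp.IsFiniteType {L : Type*} [CommRing L] {R : Subring L} (s : StarOp L R) : Prop :=
  ∀ E : FractionalIdeal (nonZeroDivisors R) L, E ≠ 0 →
    ((s.toFun E : Submodule R L) : Set L) =
      ⋃ F ∈ {F : FractionalIdeal (nonZeroDivisors R) L |
          F ≠ 0 ∧ (F : Submodule R L).FG ∧ F ≤ E},
        ((s.toFun F : Submodule R L) : Set L)

/-- `StarFC L R` is the set of star operations of finite type on `R`. -/
def StarFC (L : Type*) [CommRing L] (R : Subring L) : Type _ :=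
  {s : StarOp L R // s.IsFiniteType}

/-- `R` is finitely star regular if `|StarFC(T)| ≤ |StarFC(R)|` for every overring `T` of `R`. -/
def FinStarRegular (L : Type*) [CommRing L] (R : Subring L) : Prop :=
  ∀ T : Subring L, R ≤ T → Cardinal.mk (StarFC L T) ≤ Cardinal.mk (StarFC L R)

/-- `R` is star regular if `|Star(T)| ≤ |Star(R)|` for every overring `T` of `R`. -/
def StarRegular (L : Type*) [CommRing L] (R : Subring L) : Prop :=
  ∀ T : Subring L, R ≤ T → Cardinal.mk (StarOp L T) ≤ Cardinal.mk (StarOp L R)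

/-!
The four star-operation axioms hold for `E ↦ (ET)^{*'}` and for `E ↦ E^*` separately, since
`E ↦ ET` is monotone and commutes with multiplication by nonzero elements; they pass to the
intersection. For idempotence the one extra point is `δ(E)T ⊆ (ET)^{*'}`, so that
`(δ(E)T)^{*'} ⊆ (ET)^{*'}`.

For finite type, take `x ∈ δ(E)`: there are finitely generated `G ⊆ E` with `x ∈ G^*` and
`H ⊆ ET` with `x ∈ H^{*'}`. The finitely many generators of `H` are `T`-combinations of finitely
many elements of `E`; adjoining these to `G` gives a finitely generated `G' ⊆ E` with
`H ⊆ G'T`, hence `x ∈ δ(G')`.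
-/

namespace Submodule

theorem FG.exists_finite_subset_le_span {R M : Type*} [Semiring R] [AddCommMonoid M]
    [Module R M] {H : Submodule R M} (hH : H.FG) {S : Set M} (h : H ≤ span R S) :
    ∃ U ⊆ S, U.Finite ∧ H ≤ span R U := by
  have hS : span R S = ⨆ x : S, span R {(x : M)} := by
    rw [← span_iUnion, Set.iUnion_of_singleton_coe]
  obtain ⟨t, ht⟩ := CompleteLattice.IsCompactElement.exists_finset_of_le_iSup _
    ((fg_iff_compact H).1 hH) _ (hS ▸ h)
  refine ⟨Subtype.val '' (t : Set S), Subtype.coe_image_subset S _, t.finite_toSet.image _,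
    ht.trans ?_⟩
  exact iSup₂_le fun x hx => span_mono (Set.singleton_subset_iff.2 ⟨x, hx, rfl⟩)

def restrictSubring {L : Type*} [CommRing L] {R T : Subring L} (hRT : R ≤ T)
    (M : Submodule T L) : Submodule R L where
  carrier := M
  add_mem' := M.add_mem
  zero_mem' := M.zero_mem
  smul_mem' r _ hx := M.smul_mem ⟨r, hRT r.2⟩ hx

end Submodule

open Submodule

namespace FractionalIdeal

theorem ne_zero_of_le {R P : Type*} [CommRing R] [CommRing P] [Algebra R P] {S : Submonoid R}
    {E F : FractionalIdeal S P} (hE : E ≠ 0) (h : E ≤ F) : F ≠ 0 := by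
  rw [← bot_eq_zero] at hE ⊢
  exact ne_bot_of_le_ne_bot hE h

variable {L : Type*} [Field L] {R T : Subring L} (hRT : R ≤ T)

/-- The extension `ET` of a fractional ideal of `R` to the overring `T`. -/
def extendOverring (E : FractionalIdeal R⁰ L) : FractionalIdeal T⁰ L :=
  ⟨span T (E : Set L), by
    obtain ⟨a, ha, hint⟩ := E.isFractional
    refine isFractional_span_iff.2 ⟨⟨a, hRT a.2⟩, mem_nonZeroDivisors_of_ne_zero fun h0 =>
      nonZeroDivisors.ne_zero ha (by simpa using congrArg Subtype.val h0), fun b hb => ?_⟩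
    obtain ⟨r, hr⟩ := hint b hb
    exact ⟨⟨r, hRT r.2⟩, hr⟩⟩

variable {hRT}

theorem coe_extendOverring (E : FractionalIdeal R⁰ L) :
    (E.extendOverring hRT : Submodule T L) = span T (E : Set L) :=
  rfl

theorem subset_extendOverring (E : FractionalIdeal R⁰ L) :
    (E : Set L) ⊆ E.extendOverring hRT :=
  subset_span

theorem extendOverring_le_iff {E : FractionalIdeal R⁰ L} {F : FractionalIdeal T⁰ L} :
    E.extendOverring hRT ≤ F ↔ (E : Set L) ⊆ F :=
  span_le

theorem extendOverring_mono {E F : FractionalIdeal R⁰ L} (h : E ≤ F) :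
    E.extendOverring hRT ≤ F.extendOverring hRT :=
  extendOverring_le_iff.2 fun _ hx => subset_extendOverring F (h hx)

theorem extendOverring_ne_zero {E : FractionalIdeal R⁰ L} (hE : E ≠ 0) :
    E.extendOverring hRT ≠ 0 := by
  obtain ⟨x, hxE, hx0⟩ := exists_mem_ne_zero_of_ne_bot (coeToSubmodule_ne_bot.2 hE)
  intro h
  have hx : x ∈ E.extendOverring hRT := subset_extendOverring E hxE
  exact hx0 ((mem_zero_iff _).1 (h ▸ hx))

theorem coe_extendOverring_eq_image_mul {a : L} {E F : FractionalIdeal R⁰ L}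
    (h : (F : Set L) = (a * ·) '' E) :
    ((F.extendOverring hRT : Submodule T L) : Set L) =
      (a * ·) '' (E.extendOverring hRT : Submodule T L) := by
  rw [coe_extendOverring, coe_extendOverring, h]
  exact congrArg SetLike.coe (span_image (LinearMap.mulLeft T a))

theorem exists_fg_le_and_le_extendOverring {E : FractionalIdeal R⁰ L}
    {H : FractionalIdeal T⁰ L} (hH : (H : Submodule T L).FG) (hHE : H ≤ E.extendOverring hRT) :
    ∃ G : FractionalIdeal R⁰ L, (G : Submodule R L).FG ∧ G ≤ E ∧ H ≤ G.extendOverring hRT := by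
  obtain ⟨U, hUE, hU, hHU⟩ := hH.exists_finite_subset_le_span (coe_le_coe.2 hHE)
  refine ⟨⟨span R U, isFractional_of_le (span_le.2 hUE)⟩, fg_span hU, span_le.2 hUE, ?_⟩
  exact coe_le_coe.1 (hHU.trans (span_mono subset_span))

end FractionalIdeal

open FractionalIdeal

namespace StarOp

section

variable {L : Type*} [CommRing L] {R : Subring L} (s : StarOp L R)

theorem toFun_ne_zero {E : FractionalIdeal R⁰ L} (hE : E ≠ 0) : s.toFun E ≠ 0 :=
  ne_zero_of_le hE (s.le_star E hE)

theorem toFun_le_toFun_of_le_toFun {E F : FractionalIdeal R⁰ L} (hE : E ≠ 0) (hF : F ≠ 0)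
    (h : F ≤ s.toFun E) : s.toFun F ≤ s.toFun E :=
  s.star_star E hE ▸ s.mono_star F _ hF (s.toFun_ne_zero hE) h

variable {s}

theorem IsFiniteType.exists_fg (hs : s.IsFiniteType) {E : FractionalIdeal R⁰ L} (hE : E ≠ 0)
    {x : L} (hx : x ∈ s.toFun E) :
    ∃ F : FractionalIdeal R⁰ L, F ≠ 0 ∧ (F : Submodule R L).FG ∧ F ≤ E ∧ x ∈ s.toFun F := by
  have hx : x ∈ ((s.toFun E : Submodule R L) : Set L) := hx
  rw [hs E hE] at hx
  simpa [and_assoc] using hx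

theorem isFiniteType_of_exists_fg
    (h : ∀ E : FractionalIdeal R⁰ L, E ≠ 0 → ∀ x ∈ s.toFun E,
      ∃ F : FractionalIdeal R⁰ L, F ≠ 0 ∧ (F : Submodule R L).FG ∧ F ≤ E ∧ x ∈ s.toFun F) :
    s.IsFiniteType := by
  intro E hE
  refine subset_antisymm (fun x hx => ?_) (Set.iUnion₂_subset fun F ⟨hF, _, hFE⟩ =>
    s.mono_star F E hF hE hFE)
  obtain ⟨F, hF, hFfg, hFE, hxF⟩ := h E hE x hx
  exact Set.mem_biUnion ⟨hF, hFfg, hFE⟩ hxF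

end

variable {L : Type*} [Field L] {R T : Subring L} (hRT : R ≤ T) (s : StarOp L R)
  (s' : StarOp L T)

/-- The fractional ideal `δ(E) = (ET)^{*'} ∩ E^*`. -/
def deltaIdeal (E : FractionalIdeal R⁰ L) : FractionalIdeal R⁰ L :=
  ⟨restrictSubring hRT (s'.toFun (E.extendOverring hRT)) ⊓ s.toFun E,
    isFractional_of_le inf_le_right⟩

variable {hRT s s'}

theorem coe_deltaIdeal (E : FractionalIdeal R⁰ L) :
    ((deltaIdeal hRT s s' E : Submodule R L) : Set L) =
      ((s'.toFun (E.extendOverring hRT) : Submodule T L) : Set L) ∩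
        ((s.toFun E : Submodule R L) : Set L) :=
  rfl

theorem mem_deltaIdeal {E : FractionalIdeal R⁰ L} {x : L} :
    x ∈ deltaIdeal hRT s s' E ↔ x ∈ s'.toFun (E.extendOverring hRT) ∧ x ∈ s.toFun E :=
  Iff.rfl

theorem le_deltaIdeal {E : FractionalIdeal R⁰ L} (hE : E ≠ 0) : E ≤ deltaIdeal hRT s s' E :=
  fun _ hx => ⟨s'.le_star _ (extendOverring_ne_zero hE) (subset_extendOverring E hx),
    s.le_star E hE hx⟩

theorem deltaIdeal_mono {E F : FractionalIdeal R⁰ L} (hE : E ≠ 0) (hF : F ≠ 0) (h : E ≤ F) :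
    deltaIdeal hRT s s' E ≤ deltaIdeal hRT s s' F :=
  fun _ ⟨hx', hx⟩ => ⟨s'.mono_star _ _ (extendOverring_ne_zero hE) (extendOverring_ne_zero hF)
    (extendOverring_mono h) hx', s.mono_star E F hE hF h hx⟩

theorem deltaIdeal_deltaIdeal {E : FractionalIdeal R⁰ L} (hE : E ≠ 0) :
    deltaIdeal hRT s s' (deltaIdeal hRT s s' E) = deltaIdeal hRT s s' E := by
  have hδ : deltaIdeal hRT s s' E ≠ 0 := ne_zero_of_le hE (le_deltaIdeal hE)
  refine le_antisymm (fun x ⟨hx', hx⟩ => ⟨?_, ?_⟩) (le_deltaIdeal hδ)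
  · refine s'.toFun_le_toFun_of_le_toFun (extendOverring_ne_zero hE)
      (extendOverring_ne_zero hδ) ?_ hx'
    exact extendOverring_le_iff.2 fun y hy => (mem_deltaIdeal.1 hy).1
  · exact s.toFun_le_toFun_of_le_toFun hE hδ (fun y hy => (mem_deltaIdeal.1 hy).2) hx

theorem deltaIdeal_eq_image_mul {a : L} (ha : a ≠ 0) {E F : FractionalIdeal R⁰ L} (hE : E ≠ 0)
    (h : ((F : Submodule R L) : Set L) = (a * ·) '' (E : Submodule R L)) :
    ((deltaIdeal hRT s s' F : Submodule R L) : Set L) =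
      (a * ·) '' (deltaIdeal hRT s s' E : Submodule R L) := by
  have h' := s'.smul_star a ha _ _ (extendOverring_ne_zero (hRT := hRT) hE)
    (coe_extendOverring_eq_image_mul h)
  rw [coe_deltaIdeal, coe_deltaIdeal, Set.image_inter (mul_right_injective₀ ha), ← h', ← s.smul_star a ha E F hE h]

variable (hRT s s')

/-- The star operation `δ(*', *)`. -/
def delta : StarOp L R where
  toFun := deltaIdeal hRT s s'
  smul_star _ ha _ _ hE h := deltaIdeal_eq_image_mul ha hE h
  le_star _ := le_deltaIdeal
  mono_star _ _ := deltaIdeal_mono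
  star_star _ := deltaIdeal_deltaIdeal

variable {hRT s s'}

theorem delta_isFiniteType (hs : s.IsFiniteType) (hs' : s'.IsFiniteType) :
    (delta hRT s s').IsFiniteType := by
  refine isFiniteType_of_exists_fg fun E hE x ⟨hx', hx⟩ => ?_
  obtain ⟨G, hG, hGfg, hGE, hxG⟩ := hs.exists_fg hE hx
  obtain ⟨H, hH, hHfg, hHE, hxH⟩ := hs'.exists_fg (extendOverring_ne_zero hE) hx'
  obtain ⟨G₀, hG₀fg, hG₀E, hHG₀⟩ := exists_fg_le_and_le_extendOverring hHfg hHE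
  have hGG' : G ≤ G ⊔ G₀ := le_sup_left
  have hG' : G ⊔ G₀ ≠ 0 := ne_zero_of_le hG hGG'
  refine ⟨G ⊔ G₀, hG', hGfg.sup hG₀fg, sup_le hGE hG₀E, ?_, s.mono_star G _ hG hG' hGG' hxG⟩
  exact s'.mono_star H _ hH (extendOverring_ne_zero hG')
    (hHG₀.trans (extendOverring_mono le_sup_right)) hxH

end StarOp

theorem delta_starOp_general (L : Type*) [Field L] (R T : Subring L)
    (hRT : R ≤ T) (star : StarOp L R) (star' : StarOp L T) :
    ∃ δ : StarOp L R,
      (∀ E : FractionalIdeal (nonZeroDivisors R) L, E ≠ 0 →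
        ∀ ET : FractionalIdeal (nonZeroDivisors T) L,
          (ET : Submodule T L) = Submodule.span T ((E : Submodule R L) : Set L) →
          ((δ.toFun E : Submodule R L) : Set L) =
            ((star'.toFun ET : Submodule T L) : Set L) ∩
              ((star.toFun E : Submodule R L) : Set L)) ∧
      (star.IsFiniteType → star'.IsFiniteType → δ.IsFiniteType) := by
  refine ⟨StarOp.delta hRT star star', fun E _ ET hET => ?_, StarOp.delta_isFiniteType⟩
  obtain rfl : ET = E.extendOverring hRT := coeToSubmodule_injective hET
  exact StarOp.coe_deltaIdeal E

/-- for an overring `T` of `R`, a star operation `*` on `R` and a star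
operation `*'` on `T`, the map `E ↦ (ET)^{*'} ∩ E^{*}` is a star operation on `R`,
which is of finite type whenever `*` and `*'` are. -/
theorem delta_starOp (L : Type*) [Field L] (R T : Subring L) [IsFractionRing R L]
    (hRT : R ≤ T) (star : StarOp L R) (star' : StarOp L T) :
    ∃ δ : StarOp L R,
      (∀ E : FractionalIdeal (nonZeroDivisors R) L, E ≠ 0 →
        ∀ ET : FractionalIdeal (nonZeroDivisors T) L,
          (ET : Submodule T L) = Submodule.span T ((E : Submodule R L) : Set L) →
          ((δ.toFun E : Submodule R L) : Set L) =
            ((star'.toFun ET : Submodule T L) : Set L) ∩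
              ((star.toFun E : Submodule R L) : Set L)) ∧
      (star.IsFiniteType → star'.IsFiniteType → δ.IsFiniteType) :=
  delta_starOp_general L R T hRT star star'
end

section
/- If R is an integral domain with quotient field L and complete integral closure R̄ such that (R : R̄) = M is a maximal ideal of R, then (R : M) = (M : M) = R̄; consequently M is a divisorial ideal of R, i.e., (R : (R : M)) = M. -/
open scoped nonZeroDivisors

/-- The colon set `(A : S) = {x ∈ L : xS ⊆ A}` for subsets `A, S` of `L`. -/
def setColon {L : Type*} [CommRing L] (A S : Set L) : Set L :=
  {x : L | ∀ y ∈ S, x * y ∈ A}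

/-- if the conductor `(R : R̄)` of the complete integral closure `R̄` of `R`
is a maximal ideal `M` of `R`, then `(R : M) = (M : M) = R̄`; consequently `M` is
divisorial, i.e. `(R : (R : M)) = M`. -/
theorem conductor_maximal_divisorial (L : Type*) [Field L] (R : Subring L)
    [IsFractionRing R L] (Rbar : Subring L)
    (hRbar : ∀ x : L, x ∈ Rbar ↔ ∃ d : R, d ≠ 0 ∧ ∀ n : ℕ, (d : L) * x ^ n ∈ R)
    (M : Ideal R) (hM : M.IsMaximal)
    (hcond : ∀ x : L, (∀ y ∈ Rbar, x * y ∈ R) ↔ ∃ m ∈ M, ((m : L) = x)) :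
    setColon (R : Set L) {x : L | ∃ m ∈ M, ((m : L) = x)} = (Rbar : Set L) ∧
    setColon {x : L | ∃ m ∈ M, ((m : L) = x)} {x : L | ∃ m ∈ M, ((m : L) = x)} =
      (Rbar : Set L) ∧
    setColon (R : Set L) (setColon (R : Set L) {x : L | ∃ m ∈ M, ((m : L) = x)}) =
      {x : L | ∃ m ∈ M, ((m : L) = x)} := by
  set S : Set L := {x : L | ∃ m ∈ M, ((m : L) = x)} with hS
  have h1notM : (1 : R) ∉ M := fun h => hM.ne_top ((Ideal.eq_top_iff_one M).2 h)
  -- Step 1: Rbar * S ⊆ S (M is an ideal of Rbar)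
  have step1 : ∀ y ∈ Rbar, ∀ x ∈ S, y * x ∈ S := by
    intro y hy x hx
    rw [hS] at hx ⊢
    rw [Set.mem_setOf_eq, ← hcond]
    intro z hz
    have h1 : x * (y * z) ∈ R := (hcond x).2 hx (y * z) (mul_mem hy hz)
    have : y * x * z = x * (y * z) := by ring
    rw [this]; exact h1
  -- M contains a nonzero element
  have hMne : ∃ m : R, m ∈ M ∧ (m : L) ≠ 0 := by
    by_contra h
    push_neg at h
    have hMbot : M = ⊥ := by
      ext m
      simp only [Ideal.mem_bot]
      constructor
      · intro hm
        have := h m hm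
        exact Subtype.ext (by simpa using this)
      · rintro rfl; exact M.zero_mem
    have hunit : ∀ d : R, d ≠ 0 → ∃ c : R, c * d = 1 := by
      intro d hd
      have hlt : M < Ideal.span {d} := by
        rw [hMbot]
        refine bot_lt_iff_ne_bot.2 ?_
        intro hsp
        apply hd
        have : d ∈ Ideal.span {d} := Ideal.mem_span_singleton_self d
        rw [hsp] at this
        simpa using this
      have htop : Ideal.span {d} = ⊤ := hM.1.2 _ hlt
      have h1 : (1 : R) ∈ Ideal.span {d} := htop ▸ Submodule.mem_top
      obtain ⟨c, hc⟩ := Ideal.mem_span_singleton'.1 h1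
      exact ⟨c, hc⟩
    have hRbarR : ∀ y ∈ Rbar, (1 : L) * y ∈ R := by
      intro y hy
      obtain ⟨d, hd, hdn⟩ := (hRbar y).1 hy
      obtain ⟨c, hc⟩ := hunit d hd
      have h1 : (d : L) * y ∈ R := by simpa using hdn 1
      have hcL : (c : L) * (d : L) = 1 := by exact_mod_cast congrArg (Subtype.val) hc
      have : (1 : L) * y = (c : L) * ((d : L) * y) := by
        rw [← mul_assoc, hcL]
      rw [this]
      exact mul_mem c.2 h1
    obtain ⟨m', hm', hm'1⟩ := (hcond 1).1 hRbarR
    have : m' = 1 := Subtype.ext (by simpa using hm'1)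
    exact h1notM (this ▸ hm')
  -- Key inclusion: (R : S) ⊆ Rbar
  have hsub : ∀ x : L, (∀ s ∈ S, x * s ∈ R) → x ∈ Rbar := by
    intro x hx
    by_cases hc : ∀ s ∈ S, x * s ∈ S
    · obtain ⟨m0, hm0, hm0ne⟩ := hMne
      rw [hRbar]
      refine ⟨m0, fun h => hm0ne (by rw [h]; simp), fun n => ?_⟩
      have key : ∀ n : ℕ, x ^ n * (m0 : L) ∈ S := by
        intro n
        induction n with
        | zero => exact ⟨m0, hm0, by simp⟩
        | succ n ih =>
          have h1 := hc _ ih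
          have : x ^ (n + 1) * (m0 : L) = x * (x ^ n * (m0 : L)) := by ring
          rw [this]; exact h1
      obtain ⟨m, hm, hme⟩ := key n
      rw [mul_comm]
      exact hme ▸ m.2
    · push_neg at hc
      obtain ⟨s, hs, hxs⟩ := hc
      obtain ⟨m0, hm0, rfl⟩ := hs
      obtain ⟨r, hr⟩ : ∃ r : R, (r : L) = x * (m0 : L) :=
        ⟨⟨_, hx _ ⟨m0, hm0, rfl⟩⟩, rfl⟩
      have hrM : r ∉ M := fun h => hxs ⟨r, h, hr⟩
      have hlt : M < M ⊔ Ideal.span {r} := by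
        refine lt_of_le_of_ne le_sup_left (fun heq => hrM ?_)
        have : r ∈ M ⊔ Ideal.span {r} :=
          Submodule.mem_sup_right (Ideal.mem_span_singleton_self r)
        rwa [← heq] at this
      have htop : M ⊔ Ideal.span {r} = ⊤ := hM.1.2 _ hlt
      have h1 : (1 : R) ∈ M ⊔ Ideal.span {r} := htop ▸ Submodule.mem_top
      obtain ⟨m, hm, t, ht, h1⟩ := Submodule.mem_sup.1 h1
      obtain ⟨c, rfl⟩ := Ideal.mem_span_singleton'.1 ht
      exfalso
      have hRbarR : ∀ y ∈ Rbar, (1 : L) * y ∈ R := by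
        intro y hy
        have hym : y * (m0 : L) ∈ S := step1 y hy _ ⟨m0, hm0, rfl⟩
        have h2 : x * (y * (m0 : L)) ∈ R := hx _ hym
        have h3 : (m : L) * y ∈ R := (hcond (m : L)).2 ⟨m, hm, rfl⟩ y hy
        have h1L : (1 : L) = (m : L) + (c : L) * (r : L) := by
          exact_mod_cast congrArg (Subtype.val) h1.symm
        have : (1 : L) * y = (m : L) * y + (c : L) * (x * (y * (m0 : L))) := by
          rw [h1L, hr]; ring
        rw [this]
        exact add_mem h3 (mul_mem c.2 h2)
      obtain ⟨m', hm', hm'1⟩ := (hcond 1).1 hRbarR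
      have : m' = 1 := Subtype.ext (by simpa using hm'1)
      exact h1notM (this ▸ hm')
  -- Reverse: Rbar ⊆ (R : S)
  have hsup : ∀ y ∈ Rbar, ∀ s ∈ S, y * s ∈ R := by
    intro y hy s hs
    have := (hcond s).2 hs y hy
    rwa [mul_comm]
  have hSR : S ⊆ (R : Set L) := by
    rintro s ⟨m, hm, rfl⟩
    exact m.2
  have eq1 : setColon (R : Set L) S = (Rbar : Set L) := by
    ext x
    exact ⟨fun hx => hsub x hx, fun hx => hsup x hx⟩
  refine ⟨eq1, ?_, ?_⟩
  · ext x
    constructor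
    · intro hx
      exact hsub x (fun s hs => hSR (hx s hs))
    · intro hx s hs
      exact step1 x hx s hs
  · rw [eq1]
    ext x
    constructor
    · intro hx
      exact (hcond x).1 hx
    · intro hx y hy
      exact (hcond x).2 hx y hy
end
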